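/- arXiv:1410.2976 — 2 statements merged into one kernel-verified Lean document; each statement's English description precedes it below -/
import Mathlib

section
/- Suppose there exists a numéraire strategy η with value N = η · P > 0. Then to every self-financing investment-consumption strategy H with H_0 = 0 there corresponds a pure-investment strategy K, defined by K_t = H_t + η_t Σ_{s=1}^{t−1} (H_s − H_{s+1}) · P_s / N_s, satisfying (K_t − K_{t+1}) · P_t = 0 for all t; and if H_{T+1} = 0 then K_T · P_T = N_T Σ_{s=1}^T (H_s − H_{s+1}) · P_s / N_s ≥ 0. Consequently, there exists an investment-consumption arbitrage if and only if there exists a pure-investment arbitrage. -/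
open MeasureTheory Filter

noncomputable section

/-- Euclidean dot product on `Fin n → ℝ`. -/
def dotp {n : ℕ} (a b : Fin n → ℝ) : ℝ := ∑ i, a i * b i

/-- A discrete-time local martingale: there is a localizing sequence of stopping
times tending to infinity such that each stopped process is a true martingale. -/
def IsLocalMartingale {Ω : Type*} {m : MeasurableSpace Ω} {E : Type*}
    [NormedAddCommGroup E] [NormedSpace ℝ E] [CompleteSpace E]
    (ℱ : MeasureTheory.Filtration ℕ m) (μ : Measure Ω) (M : ℕ → Ω → E) : Prop :=
  ∃ τ : ℕ → Ω → ℕ, (∀ N, IsStoppingTime ℱ (fun ω => ((τ N ω : ℕ) : WithTop ℕ))) ∧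
    (∀ ω, Tendsto (fun N => τ N ω) atTop atTop) ∧
    ∀ N, Martingale (MeasureTheory.stoppedProcess M (fun ω => ((τ N ω : ℕ) : WithTop ℕ))) ℱ μ

/-- A martingale deflator: a strictly positive adapted process `Y` with `PY` a
true martingale. -/
def IsMartDeflator {Ω : Type*} {m : MeasurableSpace Ω} {n : ℕ}
    (ℱ : MeasureTheory.Filtration ℕ m) (μ : Measure Ω)
    (P : ℕ → Ω → Fin n → ℝ) (Y : ℕ → Ω → ℝ) : Prop :=
  Adapted ℱ Y ∧ (∀ t, ∀ᵐ ω ∂μ, 0 < Y t ω) ∧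
    Martingale (fun t ω => Y t ω • P t ω) ℱ μ

/-- A pure-investment strategy: predictable, self-financing with zero
consumption (convention `H 0 = H 1`). -/
def PureInvestment {Ω : Type*} {m : MeasurableSpace Ω} {n : ℕ}
    (ℱ : MeasureTheory.Filtration ℕ m) (μ : Measure Ω)
    (P H : ℕ → Ω → Fin n → ℝ) : Prop :=
  (∀ t, StronglyMeasurable[ℱ t] (H (t + 1))) ∧ H 0 = H 1 ∧
    ∀ t, 1 ≤ t → ∀ᵐ ω ∂μ, dotp (H t ω - H (t + 1) ω) (P t ω) = 0

/-- An investment-consumption arbitrage over the horizon `T`: a predictable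
strategy, starting from zero (`H 0 = 0`, so `C_0 = -H_1 ⬝ P_0`), liquidated at
`T` (`H (T+1) = 0`), with nonnegative consumption which is strictly positive at
some time with positive probability. -/
def InvConsArbitrage {Ω : Type*} {m : MeasurableSpace Ω} {n : ℕ}
    (ℱ : MeasureTheory.Filtration ℕ m) (μ : Measure Ω)
    (P H : ℕ → Ω → Fin n → ℝ) (T : ℕ) : Prop :=
  (∀ t, StronglyMeasurable[ℱ t] (H (t + 1))) ∧ (∀ ω, H 0 ω = 0) ∧
    (∀ ω, H (T + 1) ω = 0) ∧
    (∀ t, t ≤ T → ∀ᵐ ω ∂μ, 0 ≤ dotp (H t ω - H (t + 1) ω) (P t ω)) ∧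
    0 < μ {ω | ∃ t ≤ T, 0 < dotp (H t ω - H (t + 1) ω) (P t ω)}

/-- A terminal-consumption arbitrage: an investment-consumption arbitrage whose
terminal wealth is strictly positive with positive probability. -/
def TerminalConsArbitrage {Ω : Type*} {m : MeasurableSpace Ω} {n : ℕ}
    (ℱ : MeasureTheory.Filtration ℕ m) (μ : Measure Ω)
    (P H : ℕ → Ω → Fin n → ℝ) (T : ℕ) : Prop :=
  InvConsArbitrage ℱ μ P H T ∧ 0 < μ {ω | 0 < dotp (H T ω) (P T ω)}

/-- A pure-investment arbitrage: a terminal-consumption arbitrage with no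
intermediate consumption. -/
def PureInvArbitrage {Ω : Type*} {m : MeasurableSpace Ω} {n : ℕ}
    (ℱ : MeasureTheory.Filtration ℕ m) (μ : Measure Ω)
    (P H : ℕ → Ω → Fin n → ℝ) (T : ℕ) : Prop :=
  TerminalConsArbitrage ℱ μ P H T ∧
    ∀ t, 1 ≤ t → t < T → ∀ᵐ ω ∂μ, dotp (H t ω - H (t + 1) ω) (P t ω) = 0

/-- A complete market: every `ℱ T`-measurable payoff is replicable by a
pure-investment strategy. -/
def MarketComplete {Ω : Type*} {m : MeasurableSpace Ω} {n : ℕ}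
    (ℱ : MeasureTheory.Filtration ℕ m) (μ : Measure Ω)
    (P : ℕ → Ω → Fin n → ℝ) : Prop :=
  ∀ T : ℕ, 0 < T → ∀ ξ : Ω → ℝ, StronglyMeasurable[ℱ T] ξ →
    ∃ H : ℕ → Ω → Fin n → ℝ, PureInvestment ℱ μ P H ∧
      (fun ω => dotp (H T ω) (P T ω)) =ᵐ[μ] ξ

/-- The pure-investment strategy obtained from an investment-consumption
strategy `H` by reinvesting all consumption into the numéraire `η`. -/
def reinvest {Ω : Type*} {n : ℕ} (P η H : ℕ → Ω → Fin n → ℝ) (t : ℕ) (ω : Ω) :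
    Fin n → ℝ :=
  H t ω + (∑ s ∈ Finset.Icc 1 (t - 1),
    dotp (H s ω - H (s + 1) ω) (P s ω) / dotp (η s ω) (P s ω)) • η t ω

/-! Consumption `C_s` reinvested in the numéraire buys `C_s / N_s` units of `η`, and since `η`
is self-financing these units cost nothing to hold afterwards. Hence
`H_t + (∑_{a ≤ s < t} C_s / N_s) η_t` is self-financing from time `a` on, and once `H` is
liquidated at `T` its wealth is `N_T ∑_{a ≤ s ≤ T} C_s / N_s`: nonnegative, and positive wherever
some consumption was. For an arbitrage the reinvestment starts at `a = 0`, so as to capture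
`C_0 = -H_1 ⬝ P_0`, and the strategy is stopped after `T`. -/

section Reinvestment

variable {Ω : Type*} {n : ℕ}

lemma dotp_add_left (a b c : Fin n → ℝ) : dotp (a + b) c = dotp a c + dotp b c :=
  add_dotProduct _ _ _

lemma dotp_smul_left (r : ℝ) (a c : Fin n → ℝ) : dotp (r • a) c = r * dotp a c :=
  smul_dotProduct _ _ _

lemma Measurable.dotp {α : Type*} {mα : MeasurableSpace α} {f g : α → Fin n → ℝ}
    (hf : Measurable f) (hg : Measurable g) : Measurable fun x => dotp (f x) (g x) :=
  (continuous_fst.dotProduct continuous_snd).measurable.comp (hf.prodMk hg)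

def consumption (P H : ℕ → Ω → Fin n → ℝ) (t : ℕ) (ω : Ω) : ℝ :=
  dotp (H t ω - H (t + 1) ω) (P t ω)

def reinvestFrom (a : ℕ) (P η H : ℕ → Ω → Fin n → ℝ) (t : ℕ) (ω : Ω) : Fin n → ℝ :=
  H t ω + (∑ s ∈ Finset.Ico a t, consumption P H s ω / dotp (η s ω) (P s ω)) • η t ω

def reinvestUntil (T : ℕ) (P η H : ℕ → Ω → Fin n → ℝ) (t : ℕ) : Ω → Fin n → ℝ :=
  if t ≤ T then reinvestFrom 0 P η H t else 0

variable {P η H : ℕ → Ω → Fin n → ℝ}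

lemma consumption_eq_sub (t : ℕ) (ω : Ω) :
    consumption P H t ω = dotp (H t ω) (P t ω) - dotp (H (t + 1) ω) (P t ω) :=
  sub_dotProduct _ _ _

lemma reinvest_eq_reinvestFrom_one : reinvest P η H = reinvestFrom 1 P η H := by
  have hIcc : ∀ t, Finset.Icc 1 (t - 1) = Finset.Ico 1 t := fun t => by ext; simp; omega
  ext t ω
  simp only [reinvest, reinvestFrom, hIcc, consumption]

lemma consumption_reinvestFrom_eq_zero {a t : ℕ} {ω : Ω} (hat : a ≤ t)
    (hN : dotp (η t ω) (P t ω) ≠ 0) (hη : consumption P η t ω = 0) :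
    consumption P (reinvestFrom a P η H) t ω = 0 := by
  rw [consumption_eq_sub] at hη
  rw [consumption_eq_sub, reinvestFrom, reinvestFrom, Finset.sum_Ico_succ_top hat, consumption_eq_sub]
  generalize (∑ s ∈ Finset.Ico a t, _ : ℝ) = A
  rw [dotp_add_left, dotp_add_left, dotp_smul_left, dotp_smul_left, ← sub_eq_zero.1 hη]
  field_simp
  ring

lemma dotp_reinvestFrom_of_eq_zero {a T : ℕ} {ω : Ω} (haT : a ≤ T)
    (hN : dotp (η T ω) (P T ω) ≠ 0) (hH : H (T + 1) ω = 0) :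
    dotp (reinvestFrom a P η H T ω) (P T ω) =
      dotp (η T ω) (P T ω) *
        ∑ s ∈ Finset.Ico a (T + 1), consumption P H s ω / dotp (η s ω) (P s ω) := by
  have hC : consumption P H T ω = dotp (H T ω) (P T ω) := by
    rw [consumption, hH, sub_zero]
  rw [reinvestFrom, dotp_add_left, dotp_smul_left, Finset.sum_Ico_succ_top haT, hC]
  field_simp
  ring

lemma dotp_reinvest_of_eq_zero {T : ℕ} {ω : Ω} (hH0 : H 0 ω = 0)
    (hN : dotp (η T ω) (P T ω) ≠ 0) (hH : H (T + 1) ω = 0) :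
    dotp (reinvest P η H T ω) (P T ω) =
      dotp (η T ω) (P T ω) *
        ∑ s ∈ Finset.Icc 1 T, consumption P H s ω / dotp (η s ω) (P s ω) := by
  rcases Nat.eq_zero_or_pos T with rfl | hT
  · simp [reinvest, hH0, dotp]
  · rw [reinvest_eq_reinvestFrom_one, dotp_reinvestFrom_of_eq_zero hT hN hH,
      Finset.Ico_add_one_right_eq_Icc]

lemma reinvestUntil_of_le {T t : ℕ} (h : t ≤ T) :
    reinvestUntil T P η H t = reinvestFrom 0 P η H t :=
  if_pos h

lemma reinvestUntil_succ_self (T : ℕ) : reinvestUntil T P η H (T + 1) = 0 :=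
  if_neg (by omega)

lemma consumption_reinvestUntil_of_lt {T t : ℕ} {ω : Ω} (ht : t < T)
    (hN : dotp (η t ω) (P t ω) ≠ 0) (hη : consumption P η t ω = 0) :
    consumption P (reinvestUntil T P η H) t ω = 0 := by
  rw [consumption, reinvestUntil_of_le ht.le, reinvestUntil_of_le ht]
  exact consumption_reinvestFrom_eq_zero t.zero_le hN hη

lemma consumption_reinvestUntil_self_eq_dotp (T : ℕ) (ω : Ω) :
    consumption P (reinvestUntil T P η H) T ω = dotp (reinvestUntil T P η H T ω) (P T ω) := by
  rw [consumption, reinvestUntil_succ_self, Pi.zero_apply, sub_zero]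

lemma consumption_reinvestUntil_self {T : ℕ} {ω : Ω}
    (hN : dotp (η T ω) (P T ω) ≠ 0) (hH : H (T + 1) ω = 0) :
    consumption P (reinvestUntil T P η H) T ω = dotp (η T ω) (P T ω) *
      ∑ s ∈ Finset.Ico 0 (T + 1), consumption P H s ω / dotp (η s ω) (P s ω) := by
  rw [consumption_reinvestUntil_self_eq_dotp, reinvestUntil_of_le le_rfl]
  exact dotp_reinvestFrom_of_eq_zero T.zero_le hN hH

lemma consumption_reinvestUntil_self_nonneg {T : ℕ} {ω : Ω}
    (hN : ∀ t, 0 < dotp (η t ω) (P t ω)) (hC : ∀ t ≤ T, 0 ≤ consumption P H t ω)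
    (hH : H (T + 1) ω = 0) : 0 ≤ consumption P (reinvestUntil T P η H) T ω := by
  rw [consumption_reinvestUntil_self (hN T).ne' hH]
  exact mul_nonneg (hN T).le (Finset.sum_nonneg fun s hs =>
    div_nonneg (hC s (Nat.lt_succ_iff.1 (Finset.mem_Ico.1 hs).2)) (hN s).le)

lemma consumption_reinvestUntil_self_pos {T : ℕ} {ω : Ω}
    (hN : ∀ t, 0 < dotp (η t ω) (P t ω)) (hC : ∀ t ≤ T, 0 ≤ consumption P H t ω)
    (hH : H (T + 1) ω = 0) (hpos : ∃ t ≤ T, 0 < consumption P H t ω) :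
    0 < consumption P (reinvestUntil T P η H) T ω := by
  obtain ⟨t, htT, ht⟩ := hpos
  rw [consumption_reinvestUntil_self (hN T).ne' hH]
  refine mul_pos (hN T) (Finset.sum_pos' (fun s hs => ?_)
    ⟨t, Finset.mem_Ico.2 ⟨t.zero_le, Nat.lt_succ_of_le htT⟩, div_pos ht (hN t)⟩)
  exact div_nonneg (hC s (Nat.lt_succ_iff.1 (Finset.mem_Ico.1 hs).2)) (hN s).le

section Filtration

variable {m : MeasurableSpace Ω} {ℱ : Filtration ℕ m} {μ : Measure Ω}

lemma PureInvestment.ae_consumption_eq_zero (hη : PureInvestment ℱ μ P η) :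
    ∀ᵐ ω ∂μ, ∀ t, consumption P η t ω = 0 := by
  obtain ⟨-, hη01, hηsf⟩ := hη
  refine ae_all_iff.2 fun t => ?_
  rcases Nat.eq_zero_or_pos t with rfl | ht
  · exact Eventually.of_forall fun ω => by simp [consumption, hη01, dotp]
  · exact hηsf t ht

lemma adapted_of_predictable {E : Type*} [TopologicalSpace E] [TopologicalSpace.PseudoMetrizableSpace E]
    [MeasurableSpace E] [BorelSpace E] {X : ℕ → Ω → E} (h0 : StronglyMeasurable[ℱ 0] (X 0))
    (h : ∀ t, StronglyMeasurable[ℱ t] (X (t + 1))) : Adapted ℱ X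
  | 0 => h0.measurable
  | t + 1 => ((h t).mono (ℱ.mono t.le_succ)).measurable

lemma adapted_consumption (hP : Adapted ℱ P) (hH : Adapted ℱ H)
    (hHpred : ∀ t, StronglyMeasurable[ℱ t] (H (t + 1))) : Adapted ℱ (consumption P H) :=
  fun t => ((hH t).sub (hHpred t).measurable).dotp (hP t)

lemma MeasureTheory.Adapted.sum_Ico_succ {f : ℕ → Ω → ℝ} (hf : Adapted ℱ f) (a : ℕ) :
    Adapted ℱ fun t ω => ∑ s ∈ Finset.Ico a (t + 1), f s ω :=
  fun _ => Finset.measurable_sum _ fun _ hs =>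
    hf.measurable_le (Nat.lt_succ_iff.1 (Finset.mem_Ico.1 hs).2)

lemma measurable_reinvestFrom_succ (hP : Adapted ℱ P)
    (hηpred : ∀ t, StronglyMeasurable[ℱ t] (η (t + 1))) (hη0 : η 0 = η 1)
    (hHpred : ∀ t, StronglyMeasurable[ℱ t] (H (t + 1))) (hH0 : StronglyMeasurable[ℱ 0] (H 0))
    (a t : ℕ) : Measurable[ℱ t] (reinvestFrom a P η H (t + 1)) := by
  have hη : Adapted ℱ η := adapted_of_predictable (hη0 ▸ hηpred 0) hηpred
  have hN : Adapted ℱ fun t ω => dotp (η t ω) (P t ω) := fun t => (hη t).dotp (hP t)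
  have hC := adapted_consumption hP (adapted_of_predictable hH0 hHpred) hHpred
  exact (hHpred t).measurable.add
    (((hC.div hN).sum_Ico_succ a t).smul (hηpred t).measurable)

lemma predictable_reinvestUntil (hP : Adapted ℱ P)
    (hηpred : ∀ t, StronglyMeasurable[ℱ t] (η (t + 1))) (hη0 : η 0 = η 1)
    (hHpred : ∀ t, StronglyMeasurable[ℱ t] (H (t + 1))) (hH0 : StronglyMeasurable[ℱ 0] (H 0))
    (T t : ℕ) : StronglyMeasurable[ℱ t] (reinvestUntil T P η H (t + 1)) := by
  unfold reinvestUntil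
  split_ifs
  · exact (measurable_reinvestFrom_succ hP hηpred hη0 hHpred hH0 0 t).stronglyMeasurable
  · exact stronglyMeasurable_const

theorem InvConsArbitrage.pureInvArbitrage_reinvestUntil (hP : Adapted ℱ P)
    (hη : PureInvestment ℱ μ P η) (hN : ∀ t, ∀ᵐ ω ∂μ, 0 < dotp (η t ω) (P t ω)) {T : ℕ}
    (hH : InvConsArbitrage ℱ μ P H T) : PureInvArbitrage ℱ μ P (reinvestUntil T P η H) T := by
  obtain ⟨hHpred, hH0, hHT, hC, hCpos⟩ := hH
  have hgood : ∀ᵐ ω ∂μ, (∀ t, 0 < dotp (η t ω) (P t ω)) ∧ (∀ t, consumption P η t ω = 0) ∧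
      ∀ t ≤ T, 0 ≤ consumption P H t ω :=
    (ae_all_iff.2 hN).and (hη.ae_consumption_eq_zero.and
      (ae_all_iff.2 fun t => eventually_imp_distrib_left.2 (hC t)))
  have hsf : ∀ᵐ ω ∂μ, ∀ t < T, consumption P (reinvestUntil T P η H) t ω = 0 := by
    filter_upwards [hgood] with ω ⟨hNω, hηω, _⟩ t ht
    exact consumption_reinvestUntil_of_lt ht (hNω t).ne' (hηω t)
  have hlast_pos : 0 < μ {ω | 0 < consumption P (reinvestUntil T P η H) T ω} := by
    refine hCpos.trans_le (measure_mono_ae ?_)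
    filter_upwards [hgood] with ω ⟨hNω, _, hCω⟩ hpos
    exact consumption_reinvestUntil_self_pos hNω hCω (hHT ω) hpos
  refine ⟨⟨⟨predictable_reinvestUntil hP hη.1 hη.2.1 hHpred ?_ T, fun ω => ?_,
    fun ω => by rw [reinvestUntil_succ_self, Pi.zero_apply], fun t ht => ?_,
    hlast_pos.trans_le (measure_mono fun ω hω => ⟨T, le_rfl, hω⟩)⟩, ?_⟩,
    fun t _ ht => hsf.mono fun ω hω => hω t ht⟩
  · rw [show H 0 = 0 from funext hH0]
    exact stronglyMeasurable_const
  · simp [reinvestUntil_of_le, reinvestFrom, hH0]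
  · rcases ht.lt_or_eq with ht | rfl
    · exact hsf.mono fun ω hω => (hω t ht).ge
    · filter_upwards [hgood] with ω ⟨hNω, _, hCω⟩
      exact consumption_reinvestUntil_self_nonneg hNω hCω (hHT ω)
  · simpa only [consumption_reinvestUntil_self_eq_dotp] using hlast_pos

end Filtration

end Reinvestment

theorem stmt11_general {Ω : Type*} {m : MeasurableSpace Ω} (μ : Measure Ω)
    (ℱ : MeasureTheory.Filtration ℕ m) {n : ℕ}
    (P : ℕ → Ω → Fin n → ℝ) (hP : Adapted ℱ P)
    (η : ℕ → Ω → Fin n → ℝ) (hη : PureInvestment ℱ μ P η)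
    (hN : ∀ t, ∀ᵐ ω ∂μ, 0 < dotp (η t ω) (P t ω)) :
    (∀ H : ℕ → Ω → Fin n → ℝ,
      (∀ ω, H 0 ω = 0) →
      (∀ t, StronglyMeasurable[ℱ t] (H (t + 1))) →
      (∀ t, 1 ≤ t → ∀ᵐ ω ∂μ, 0 ≤ dotp (H t ω - H (t + 1) ω) (P t ω)) →
      (∀ t, 1 ≤ t → ∀ᵐ ω ∂μ,
        dotp (reinvest P η H t ω - reinvest P η H (t + 1) ω) (P t ω) = 0) ∧
      ∀ T : ℕ, (∀ ω, H (T + 1) ω = 0) → ∀ᵐ ω ∂μ,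
        dotp (reinvest P η H T ω) (P T ω)
            = dotp (η T ω) (P T ω) *
              ∑ s ∈ Finset.Icc 1 T,
                dotp (H s ω - H (s + 1) ω) (P s ω) / dotp (η s ω) (P s ω) ∧
          0 ≤ dotp (reinvest P η H T ω) (P T ω)) ∧
    ((∃ (T : ℕ) (H : ℕ → Ω → Fin n → ℝ), 0 < T ∧ InvConsArbitrage ℱ μ P H T) ↔
      (∃ (T : ℕ) (H : ℕ → Ω → Fin n → ℝ), 0 < T ∧ PureInvArbitrage ℱ μ P H T)) := by
  refine ⟨fun H hH0 _ hC => ⟨fun t ht => ?_, fun T hT => ?_⟩,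
    ⟨fun ⟨T, H, hT, hH⟩ => ⟨T, _, hT, hH.pureInvArbitrage_reinvestUntil hP hη hN⟩,
      fun ⟨T, H, hT, ⟨hH, _⟩, _⟩ => ⟨T, H, hT, hH⟩⟩⟩
  · filter_upwards [hN t, hη.ae_consumption_eq_zero] with ω hNω hηω
    rw [reinvest_eq_reinvestFrom_one]
    exact consumption_reinvestFrom_eq_zero ht hNω.ne' (hηω t)
  · filter_upwards [ae_all_iff.2 hN, ae_all_iff.2 fun t => eventually_imp_distrib_left.2 (hC t)]
      with ω hNω hCω
    have hwealth := dotp_reinvest_of_eq_zero (hH0 ω) (hNω T).ne' (hT ω)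
    refine ⟨hwealth, hwealth ▸ mul_nonneg (hNω T).le (Finset.sum_nonneg fun s hs => ?_)⟩
    exact div_nonneg (hCω s (Finset.mem_Icc.1 hs).1) (hNω s).le

/-- given a numéraire strategy `η`, every self-financing
investment-consumption strategy `H` starting from `0` yields a pure-investment
strategy `K = reinvest P η H` with `(K_t - K_{t+1}) ⬝ P_t = 0` and, when
`H_{T+1} = 0`, terminal wealth `K_T ⬝ P_T = N_T ∑_{s=1}^T C_s / N_s ≥ 0`;
consequently there is an investment-consumption arbitrage iff there is a
pure-investment arbitrage. -/
theorem stmt11 {Ω : Type*} {m : MeasurableSpace Ω} (μ : Measure Ω) [IsProbabilityMeasure μ]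
    (ℱ : MeasureTheory.Filtration ℕ m) {n : ℕ}
    (P : ℕ → Ω → Fin n → ℝ) (hP : Adapted ℱ P)
    (η : ℕ → Ω → Fin n → ℝ) (hη : PureInvestment ℱ μ P η)
    (hN : ∀ t, ∀ᵐ ω ∂μ, 0 < dotp (η t ω) (P t ω)) :
    (∀ H : ℕ → Ω → Fin n → ℝ,
      (∀ ω, H 0 ω = 0) →
      (∀ t, StronglyMeasurable[ℱ t] (H (t + 1))) →
      (∀ t, 1 ≤ t → ∀ᵐ ω ∂μ, 0 ≤ dotp (H t ω - H (t + 1) ω) (P t ω)) →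
      (∀ t, 1 ≤ t → ∀ᵐ ω ∂μ,
        dotp (reinvest P η H t ω - reinvest P η H (t + 1) ω) (P t ω) = 0) ∧
      ∀ T : ℕ, (∀ ω, H (T + 1) ω = 0) → ∀ᵐ ω ∂μ,
        dotp (reinvest P η H T ω) (P T ω)
            = dotp (η T ω) (P T ω) *
              ∑ s ∈ Finset.Icc 1 T,
                dotp (H s ω - H (s + 1) ω) (P s ω) / dotp (η s ω) (P s ω) ∧
          0 ≤ dotp (reinvest P η H T ω) (P T ω)) ∧
    ((∃ (T : ℕ) (H : ℕ → Ω → Fin n → ℝ), 0 < T ∧ InvConsArbitrage ℱ μ P H T) ↔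
      (∃ (T : ℕ) (H : ℕ → Ω → Fin n → ℝ), 0 < T ∧ PureInvArbitrage ℱ μ P H T)) :=
  stmt11_general μ ℱ P hP η hη hN
end
end

section
/- If M is a discrete-time local martingale and there is a non-random T > 0 with M_T ≥ 0 almost surely, then (M_t)_{0 ≤ t ≤ T} is a true martingale. -/
open MeasureTheory Filter

noncomputable section

/-!
On `A N = {t < τ N} ∈ ℱ t` the stopped martingale `M^{τ N}` agrees with `M` at times `t` and
`t + 1`, so `E[1_{A N} M (t+1) | ℱ t] = 1_{A N} M t`. Hence nonnegativity of `M (t+1)` passes to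
`M t`, and going backwards from `T` all `M t`, `t ≤ T`, are nonnegative. Fatou's lemma in `N` then
bounds `E[M (t+1)]` by `E|M t|`, which gives integrability going forwards from `M 0 = M^{τ N} 0`,
and dominated convergence in `N` removes the indicators from the one-step identity.
-/

open scoped Topology

section IndicatorLimits

variable {Ω : Type*} {m : MeasurableSpace Ω} {μ : Measure Ω}

theorem tendsto_indicator_apply_of_eventually_mem {ι E : Type*} [Zero E] [TopologicalSpace E]
    {l : Filter ι} {A : ι → Set Ω} {f : Ω → E} {ω : Ω} (h : ∀ᶠ i in l, ω ∈ A i) :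
    Tendsto (fun i => (A i).indicator f ω) l (𝓝 (f ω)) :=
  tendsto_const_nhds.congr' (h.mono fun _ hi => (Set.indicator_of_mem hi f).symm)

theorem tendsto_integral_indicator_of_eventually_mem {E : Type*} [NormedAddCommGroup E]
    [NormedSpace ℝ E] {A : ℕ → Set Ω} {f : Ω → E} (hA : ∀ N, MeasurableSet (A N))
    (hA_mem : ∀ ω, ∀ᶠ N in atTop, ω ∈ A N) (hf : Integrable f μ) :
    Tendsto (fun N => ∫ ω, (A N).indicator f ω ∂μ) atTop (𝓝 (∫ ω, f ω ∂μ)) :=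
  tendsto_integral_of_dominated_convergence (‖f ·‖)
    (fun N => (hf.indicator (hA N)).aestronglyMeasurable) hf.norm
    (fun _ => ae_of_all _ fun ω => norm_indicator_le_norm_self f ω)
    (ae_of_all _ fun ω => tendsto_indicator_apply_of_eventually_mem (hA_mem ω))

theorem integrable_of_tendsto_of_integral_le {F : ℕ → Ω → ℝ} {f : Ω → ℝ} {C : ℝ}
    (hF : ∀ n, Integrable (F n) μ) (hF_nonneg : ∀ n, 0 ≤ᵐ[μ] F n)
    (hlim : ∀ᵐ ω ∂μ, Tendsto (F · ω) atTop (𝓝 (f ω))) (hC : ∀ n, ∫ ω, F n ω ∂μ ≤ C) :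
    Integrable f μ := by
  refine ⟨aestronglyMeasurable_of_tendsto_ae _ (fun n => (hF n).aestronglyMeasurable) hlim, ?_⟩
  have hF_lintegral : ∀ n, ∫⁻ ω, ‖F n ω‖ₑ ∂μ ≤ ENNReal.ofReal C := fun n => by
    rw [lintegral_enorm_of_ae_nonneg (hF_nonneg n),
      ← ofReal_integral_eq_lintegral_ofReal (hF n) (hF_nonneg n)]
    exact ENNReal.ofReal_le_ofReal (hC n)
  calc ∫⁻ ω, ‖f ω‖ₑ ∂μ = ∫⁻ ω, liminf (fun n => ‖F n ω‖ₑ) atTop ∂μ :=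
        lintegral_congr_ae (by filter_upwards [hlim] with ω hω using hω.enorm.liminf_eq.symm)
    _ ≤ liminf (fun n => ∫⁻ ω, ‖F n ω‖ₑ ∂μ) atTop :=
        lintegral_liminf_le' fun n => (hF n).aemeasurable.enorm
    _ ≤ ENNReal.ofReal C := liminf_le_of_frequently_le (Frequently.of_forall hF_lintegral)
    _ < ⊤ := ENNReal.ofReal_lt_top

end IndicatorLimits

section StepLocalization

variable {Ω E : Type*} {m : MeasurableSpace Ω} {μ : Measure Ω} {ℱ : Filtration ℕ m}
  [NormedAddCommGroup E] [NormedSpace ℝ E] [CompleteSpace E]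

structure IsStepLocalization (ℱ : Filtration ℕ m) (μ : Measure Ω) (M : ℕ → Ω → E) (t : ℕ)
    (A : ℕ → Set Ω) : Prop where
  measurableSet : ∀ N, MeasurableSet[ℱ t] (A N)
  eventually_mem : ∀ ω, ∀ᶠ N in atTop, ω ∈ A N
  integrable : ∀ N, Integrable ((A N).indicator (M (t + 1))) μ
  condExp_indicator : ∀ N, μ[(A N).indicator (M (t + 1)) | ℱ t] =ᵐ[μ] (A N).indicator (M t)

namespace IsStepLocalization

variable {M : ℕ → Ω → E} {t : ℕ} {A : ℕ → Set Ω}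

theorem integrable_indicator (h : IsStepLocalization ℱ μ M t A) (N : ℕ) :
    Integrable ((A N).indicator (M t)) μ :=
  integrable_condExp.congr (h.condExp_indicator N)

theorem setIntegral_indicator_succ [IsFiniteMeasure μ] (h : IsStepLocalization ℱ μ M t A)
    (N : ℕ) {s : Set Ω} (hs : MeasurableSet[ℱ t] s) :
    ∫ ω in s, (A N).indicator (M (t + 1)) ω ∂μ = ∫ ω in s, (A N).indicator (M t) ω ∂μ := by
  rw [← setIntegral_condExp (ℱ.le t) (h.integrable N) hs]
  exact setIntegral_congr_ae (ℱ.le t s hs) ((h.condExp_indicator N).mono fun _ hω _ => hω)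

theorem ae_eq_condExp_succ [IsFiniteMeasure μ] (h : IsStepLocalization ℱ μ M t A)
    (hint : Integrable (M t) μ) (hint_succ : Integrable (M (t + 1)) μ)
    (hmeas : StronglyMeasurable[ℱ t] (M t)) :
    M t =ᵐ[μ] μ[M (t + 1) | ℱ t] := by
  refine ae_eq_condExp_of_forall_setIntegral_eq (ℱ.le t) hint_succ
    (fun _ _ _ => hint.integrableOn) (fun s hs _ => ?_) hmeas.aestronglyMeasurable
  have hA : ∀ N, MeasurableSet (A N) := fun N => ℱ.le t _ (h.measurableSet N)
  refine tendsto_nhds_unique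
    (tendsto_integral_indicator_of_eventually_mem hA h.eventually_mem hint.restrict) ?_
  exact (tendsto_integral_indicator_of_eventually_mem hA h.eventually_mem
    hint_succ.restrict).congr fun N => h.setIntegral_indicator_succ N hs

end IsStepLocalization

theorem IsStepLocalization.ae_nonneg {M : ℕ → Ω → ℝ} {t : ℕ} {A : ℕ → Set Ω}
    (h : IsStepLocalization ℱ μ M t A) (h_succ : 0 ≤ᵐ[μ] M (t + 1)) : 0 ≤ᵐ[μ] M t := by
  have h_indicator : ∀ N, 0 ≤ᵐ[μ] (A N).indicator (M t) := fun N => by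
    have : 0 ≤ᵐ[μ] (A N).indicator (M (t + 1)) :=
      h_succ.mono fun _ hω => Set.indicator_apply_nonneg fun _ => hω
    filter_upwards [condExp_nonneg this, h.condExp_indicator N] with ω h₀ h_eq
    exact h_eq ▸ h₀
  filter_upwards [ae_all_iff.2 h_indicator] with ω hω
  obtain ⟨N, hN⟩ := (h.eventually_mem ω).exists
  simpa [Set.indicator_of_mem hN] using hω N

theorem IsStepLocalization.integrable_succ [IsFiniteMeasure μ] {M : ℕ → Ω → ℝ} {t : ℕ}
    {A : ℕ → Set Ω} (h : IsStepLocalization ℱ μ M t A) (hint : Integrable (M t) μ)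
    (h_succ : 0 ≤ᵐ[μ] M (t + 1)) : Integrable (M (t + 1)) μ := by
  refine integrable_of_tendsto_of_integral_le (C := ∫ ω, ‖M t ω‖ ∂μ) h.integrable
    (fun N => h_succ.mono fun _ hω => Set.indicator_apply_nonneg fun _ => hω)
    (ae_of_all _ fun ω => tendsto_indicator_apply_of_eventually_mem (h.eventually_mem ω))
    fun N => ?_
  rw [← setIntegral_univ, h.setIntegral_indicator_succ N MeasurableSet.univ, setIntegral_univ]
  exact (Real.le_norm_self _).trans (norm_integral_le_of_norm_le hint.norm
    (ae_of_all _ fun ω => norm_indicator_le_norm_self _ ω))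

end StepLocalization

theorem martingale_min_of_ae_eq_condExp_succ {Ω E : Type*} {m : MeasurableSpace Ω}
    {μ : Measure Ω} [IsFiniteMeasure μ] {ℱ : Filtration ℕ m} [NormedAddCommGroup E]
    [NormedSpace ℝ E] [CompleteSpace E] {M : ℕ → Ω → E} {T : ℕ} (hadp : StronglyAdapted ℱ M)
    (hint : ∀ t ≤ T, Integrable (M t) μ) (hstep : ∀ t < T, M t =ᵐ[μ] μ[M (t + 1) | ℱ t]) :
    Martingale (fun t => M (min t T)) ℱ μ := by
  refine martingale_nat (fun t => (hadp _).mono (ℱ.mono (min_le_left t T)))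
    (fun t => hint _ (min_le_right t T)) fun t => ?_
  rcases lt_or_ge t T with ht | ht
  · rw [min_eq_left ht.le, min_eq_left (Nat.succ_le_of_lt ht)]
    exact hstep t ht
  · rw [min_eq_right ht, min_eq_right (ht.trans t.le_succ),
      condExp_of_stronglyMeasurable (ℱ.le t) ((hadp T).mono (ℱ.mono ht)) (hint T le_rfl)]

namespace IsLocalMartingale

variable {Ω E : Type*} {m : MeasurableSpace Ω} {μ : Measure Ω} {ℱ : Filtration ℕ m}
  [NormedAddCommGroup E] [NormedSpace ℝ E] [CompleteSpace E] {M : ℕ → Ω → E}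

theorem stronglyAdapted (hM : IsLocalMartingale ℱ μ M) : StronglyAdapted ℱ M := by
  obtain ⟨τ, -, hτ, hmart⟩ := hM
  intro t
  refine stronglyMeasurable_of_tendsto atTop (fun N => (hmart N).stronglyAdapted t)
    (tendsto_pi_nhds.2 fun ω => tendsto_const_nhds.congr' ?_)
  filter_upwards [tendsto_atTop.1 (hτ ω) t] with N hN
  exact (stoppedProcess_eq_of_le (τ := fun ω => (τ N ω : WithTop ℕ))
    (WithTop.coe_le_coe.2 hN)).symm

theorem integrable_zero (hM : IsLocalMartingale ℱ μ M) : Integrable (M 0) μ := by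
  obtain ⟨τ, -, -, hmart⟩ := hM
  refine ((hmart 0).integrable 0).congr (ae_of_all _ fun ω => ?_)
  exact stoppedProcess_eq_of_le (WithTop.coe_le_coe.2 (Nat.zero_le _))

theorem exists_isStepLocalization (hM : IsLocalMartingale ℱ μ M) (t : ℕ) :
    ∃ A, IsStepLocalization ℱ μ M t A := by
  obtain ⟨τ, hτ_stop, hτ, hmart⟩ := hM
  have hA : ∀ N, MeasurableSet[ℱ t] {ω | t < τ N ω} := fun N => by
    have : {ω | t < τ N ω} = {ω | (τ N ω : WithTop ℕ) ≤ t}ᶜ := by ext; simp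
    exact this ▸ (hτ_stop N t).compl
  have h_stopped : ∀ N, ∀ i ≤ t + 1,
      {ω | t < τ N ω}.indicator (stoppedProcess M (fun ω => (τ N ω : WithTop ℕ)) i) =
        {ω | t < τ N ω}.indicator (M i) := fun N i hi =>
    Set.indicator_congr fun ω hω =>
      stoppedProcess_eq_of_le (WithTop.coe_le_coe.2 (hi.trans (Nat.succ_le_of_lt hω)))
  refine ⟨fun N => {ω | t < τ N ω}, hA,
    fun ω => (tendsto_atTop.1 (hτ ω) (t + 1)).mono fun N hN => Nat.lt_of_succ_le hN,
    fun N => h_stopped N _ le_rfl ▸ ((hmart N).integrable (t + 1)).indicator (ℱ.le t _ (hA N)),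
    fun N => ?_⟩
  rw [← h_stopped N _ le_rfl, ← h_stopped N _ t.le_succ]
  filter_upwards [condExp_indicator ((hmart N).integrable (t + 1)) (hA N),
    (hmart N).condExp_ae_eq t.le_succ] with ω h_ind h_mart
  rw [h_ind]
  by_cases hω : ω ∈ {ω | t < τ N ω}
  · simp only [Set.indicator_of_mem hω, h_mart]
  · simp only [Set.indicator_of_notMem hω]

theorem ae_nonneg_of_le {M : ℕ → Ω → ℝ} (hM : IsLocalMartingale ℱ μ M) {T : ℕ}
    (hMT : 0 ≤ᵐ[μ] M T) {t : ℕ} (ht : t ≤ T) : 0 ≤ᵐ[μ] M t := by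
  induction ht using Nat.decreasingInduction with
  | self => exact hMT
  | of_succ t _ h_succ => exact (hM.exists_isStepLocalization t).choose_spec.ae_nonneg h_succ

theorem integrable_of_le [IsFiniteMeasure μ] {M : ℕ → Ω → ℝ} (hM : IsLocalMartingale ℱ μ M)
    {T : ℕ} (hMT : 0 ≤ᵐ[μ] M T) {t : ℕ} (ht : t ≤ T) : Integrable (M t) μ := by
  induction t with
  | zero => exact hM.integrable_zero
  | succ t ih =>
    exact (hM.exists_isStepLocalization t).choose_spec.integrable_succ (ih (by omega))
      (hM.ae_nonneg_of_le hMT ht)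

end IsLocalMartingale

theorem stmt18_general {Ω : Type*} {m : MeasurableSpace Ω} (μ : Measure Ω) [IsProbabilityMeasure μ]
    (ℱ : MeasureTheory.Filtration ℕ m)
    (M : ℕ → Ω → ℝ) (hM : IsLocalMartingale ℱ μ M)
    (T : ℕ) (hMT : ∀ᵐ ω ∂μ, 0 ≤ M T ω) :
    (∀ t, t ≤ T → Integrable (M t) μ) ∧
      Martingale (fun t ω => M (min t T) ω) ℱ μ := by
  have hint : ∀ t ≤ T, Integrable (M t) μ := fun t ht => hM.integrable_of_le hMT ht
  refine ⟨hint, martingale_min_of_ae_eq_condExp_succ hM.stronglyAdapted hint fun t ht => ?_⟩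
  obtain ⟨A, hA⟩ := hM.exists_isStepLocalization t
  exact hA.ae_eq_condExp_succ (hint t ht.le) (hint (t + 1) ht) (hM.stronglyAdapted t)

/-- a discrete-time local martingale whose value at a non-random
time `T > 0` is a.s. nonnegative is a true martingale on `[0,T]` (encoded by
freezing at `T`), each `M t`, `t ≤ T`, being integrable. -/
theorem stmt18 {Ω : Type*} {m : MeasurableSpace Ω} (μ : Measure Ω) [IsProbabilityMeasure μ]
    (ℱ : MeasureTheory.Filtration ℕ m)
    (M : ℕ → Ω → ℝ) (hM : IsLocalMartingale ℱ μ M)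
    (T : ℕ) (hT : 0 < T) (hMT : ∀ᵐ ω ∂μ, 0 ≤ M T ω) :
    (∀ t, t ≤ T → Integrable (M t) μ) ∧
      Martingale (fun t ω => M (min t T) ω) ℱ μ :=
  stmt18_general μ ℱ M hM T hMT
end
end
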